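/- arXiv:math/9808110 — 2 statements merged into one kernel-verified Lean document; each statement's English description precedes it below -/
import Mathlib

section
/- The images of the p³ monomials η₊^n η₋^m δ^k with 0 ≤ n, m, k ≤ p−1 form a ℂ-vector-space basis of A; in particular A is finite dimensional with dim_ℂ A = p³. -/
open scoped TensorProduct

noncomputable section

/-- `q = exp(2πi/p)`, a primitive `p`-th root of unity. -/
def q (p : ℕ) : ℂ := Complex.exp (2 * Real.pi * Complex.I / p)

/-- `q^{1/2} = exp(iπ/p)`. -/
def qh (p : ℕ) : ℂ := Complex.exp (Real.pi * Complex.I / p)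

/-- The balanced q-number `[k] = (q^k - q^{-k})/(q - q^{-1})`. -/
def qnum (p k : ℕ) : ℂ := (q p ^ k - (q p)⁻¹ ^ k) / (q p - (q p)⁻¹)

/-- The balanced q-factorial `[k]! = [1][2]⋯[k]`, with `[0]! = 1`. -/
def qfact (p k : ℕ) : ℂ := ∏ j ∈ Finset.range k, qnum p (j + 1)

/-- Generators `η₊, η₋, δ` of the coordinate algebra of `E(1,1|p)`. -/
inductive Gen : Type
  | ep : Gen
  | em : Gen
  | d : Gen

open FreeAlgebra in
/-- The defining relations of `A(E(1,1|p))`: the two-sided ideal generated by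
`η₋η₊ − q²η₊η₋`, `η₊δ − q²δη₊`, `η₋δ − q²δη₋`, `δ^p − 1`, `η₊^p`, `η₋^p`. -/
inductive ERel (p : ℕ) : FreeAlgebra ℂ Gen → FreeAlgebra ℂ Gen → Prop
  | commEta : ERel p (ι ℂ Gen.em * ι ℂ Gen.ep) ((q p ^ 2) • (ι ℂ Gen.ep * ι ℂ Gen.em))
  | commEpD : ERel p (ι ℂ Gen.ep * ι ℂ Gen.d) ((q p ^ 2) • (ι ℂ Gen.d * ι ℂ Gen.ep))
  | commEmD : ERel p (ι ℂ Gen.em * ι ℂ Gen.d) ((q p ^ 2) • (ι ℂ Gen.d * ι ℂ Gen.em))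
  | deltaPow : ERel p (ι ℂ Gen.d ^ p) 1
  | epPow : ERel p (ι ℂ Gen.ep ^ p) 0
  | emPow : ERel p (ι ℂ Gen.em ^ p) 0

/-- The coordinate algebra `A = A(E(1,1|p))` of the reduced quantum Poincaré group. -/
abbrev A (p : ℕ) : Type := RingQuot (ERel p)

/-- `η₊ ∈ A`. -/
def ηp (p : ℕ) : A p := RingQuot.mkAlgHom ℂ (ERel p) (FreeAlgebra.ι ℂ Gen.ep)

/-- `η₋ ∈ A`. -/
def ηm (p : ℕ) : A p := RingQuot.mkAlgHom ℂ (ERel p) (FreeAlgebra.ι ℂ Gen.em)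

/-- `δ ∈ A`. -/
def dl (p : ℕ) : A p := RingQuot.mkAlgHom ℂ (ERel p) (FreeAlgebra.ι ℂ Gen.d)

/-! The normal-ordered monomials `η₊ⁿ η₋ᵐ δᵏ` with `n, m, k < p` span `A`: the three
`q²`-commutation relations rewrite a product of two such monomials as a scalar multiple of one, and
`η₊^p = η₋^p = 0`, `δ^p = 1` bring the exponents back below `p`. They are independent because `A`
acts on `ℂ^{p³}` by Kronecker products of a truncated shift, a cyclic shift and the diagonal
matrices `diag(1, c, …, c^{p-1})`, and this action sends the monomial `η₊ⁿ η₋ᵐ δᵏ` to a matrix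
whose first column is the standard basis vector `e_{(n,m,k)}`. -/

open scoped Kronecker

namespace Matrix

variable {R : Type*} [CommSemiring R] {p : ℕ}

theorem kronecker_pow {l n : Type*} [Fintype l] [Fintype n] [DecidableEq l] [DecidableEq n]
    (A : Matrix l l R) (B : Matrix n n R) (k : ℕ) : (A ⊗ₖ B) ^ k = (A ^ k) ⊗ₖ (B ^ k) := by
  induction k with
  | zero => simp
  | succ k ih => rw [pow_succ, ih, ← mul_kronecker_mul, ← pow_succ, ← pow_succ]

variable (R p) in
def truncShift : Matrix (Fin p) (Fin p) R := of fun i j => if (i : ℕ) = j + 1 then 1 else 0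

theorem truncShift_apply (i j : Fin p) :
    truncShift R p i j = if (i : ℕ) = j + 1 then 1 else 0 := rfl

theorem truncShift_pow_apply (n : ℕ) (i j : Fin p) :
    (truncShift R p ^ n) i j = if (i : ℕ) = j + n then 1 else 0 := by
  induction n generalizing j with
  | zero => simp [one_apply, Fin.ext_iff]
  | succ n ih =>
    rw [pow_succ, mul_apply]
    simp only [truncShift_apply, mul_ite, mul_one, mul_zero]
    by_cases h : (j : ℕ) + 1 < p
    · have hx (x : Fin p) : (x : ℕ) = j + 1 ↔ x = ⟨j + 1, h⟩ := by rw [Fin.ext_iff]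
      simp only [hx, Finset.sum_ite_eq', Finset.mem_univ, if_true, ih, add_assoc, add_comm 1]
    · rw [Finset.sum_eq_zero fun x _ => if_neg (by omega), if_neg (by omega)]

theorem truncShift_pow_self : truncShift R p ^ p = 0 := by
  ext i j
  rw [truncShift_pow_apply]
  simp only [zero_apply, ite_eq_right_iff]
  omega

variable (R p) in
def cycShift [NeZero p] : Matrix (Fin p) (Fin p) R := of fun i j => if i = j + 1 then 1 else 0

theorem cycShift_apply [NeZero p] (i j : Fin p) :
    cycShift R p i j = if i = j + 1 then 1 else 0 := rfl

open Fin.NatCast Fin.CommRing in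
theorem cycShift_pow_apply [NeZero p] (n : ℕ) (i j : Fin p) :
    (cycShift R p ^ n) i j = if i = j + n then 1 else 0 := by
  induction n generalizing j with
  | zero => simp [one_apply]
  | succ n ih =>
    rw [pow_succ, mul_apply]
    simp only [cycShift_apply, mul_ite, mul_one, mul_zero, Finset.sum_ite_eq', Finset.mem_univ,
      if_true, ih]
    push_cast
    ring_nf

theorem cycShift_pow_self [NeZero p] : cycShift R p ^ p = 1 := by
  ext i j
  rw [cycShift_pow_apply, one_apply]
  simp

def geomDiagonal (c : R) : Matrix (Fin p) (Fin p) R := diagonal fun i => c ^ (i : ℕ)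

theorem geomDiagonal_pow (c : R) (n : ℕ) :
    (geomDiagonal c : Matrix (Fin p) (Fin p) R) ^ n = geomDiagonal (c ^ n) := by
  simp only [geomDiagonal, diagonal_pow]
  congr 1
  ext i
  simp [← pow_mul, mul_comm]

theorem geomDiagonal_one : (geomDiagonal 1 : Matrix (Fin p) (Fin p) R) = 1 := by
  simp [geomDiagonal]

theorem geomDiagonal_mul_comm (c d : R) :
    (geomDiagonal c : Matrix (Fin p) (Fin p) R) * geomDiagonal d =
      geomDiagonal d * geomDiagonal c := by
  simp only [geomDiagonal, diagonal_mul_diagonal, mul_comm]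

theorem mul_geomDiagonal_apply_zero [NeZero p] {m : Type*} (M : Matrix m (Fin p) R) (c : R)
    (i : m) : (M * geomDiagonal (p := p) c) i 0 = M i 0 := by
  simp [geomDiagonal, mul_diagonal]

theorem geomDiagonal_mul_truncShift (c : R) :
    geomDiagonal c * truncShift R p = c • (truncShift R p * geomDiagonal c) := by
  ext i j
  simp only [geomDiagonal, truncShift, diagonal_mul, mul_diagonal, of_apply, smul_apply,
    smul_eq_mul]
  split_ifs with h <;> simp [h, pow_succ]; ring

theorem truncShift_mul_geomDiagonal {c d : R} (hcd : c * d = 1) :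
    truncShift R p * geomDiagonal d = c • (geomDiagonal d * truncShift R p) := by
  rw [geomDiagonal_mul_truncShift, smul_smul, hcd, one_smul]

end Matrix

section QCommute

variable {R : Type*} [Semiring R]

theorem mul_eq_inv_smul_mul_of_mul_eq_smul {K : Type*} [Field K] [Algebra K R] {a b : R} {c : K}
    (hc : c ≠ 0) (h : a * b = c • (b * a)) :
    b * a = c⁻¹ • (a * b) := by
  rw [h, smul_smul, inv_mul_cancel₀ hc, one_smul]

theorem pow_mul_pow_of_mul_eq_smul {K : Type*} [CommSemiring K] [Algebra K R] {a b : R} {c : K}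
    (h : b * a = c • (a * b)) (n k : ℕ) :
    b ^ k * a ^ n = c ^ (n * k) • (a ^ n * b ^ k) := by
  have hb (n : ℕ) : b * a ^ n = c ^ n • (a ^ n * b) := by
    induction n with
    | zero => simp
    | succ n ih =>
      rw [pow_succ', ← mul_assoc, h, smul_mul_assoc, mul_assoc, ih, mul_smul_comm, smul_smul,
        ← mul_assoc, ← pow_succ', ← pow_succ']
  induction k with
  | zero => simp
  | succ k ih =>
    rw [pow_succ, mul_assoc, hb, mul_smul_comm, ← mul_assoc, ih, smul_mul_assoc, smul_smul,
      mul_assoc, ← pow_succ, ← pow_add, add_comm, ← mul_add_one]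

theorem pow_mul_pow_mul_pow_mul_pow_mul_pow_mul_pow {K : Type*} [CommSemiring K] [Algebra K R]
    {x y z : R} {α β γ : K}
    (hyx : y * x = α • (x * y)) (hzx : z * x = β • (x * z)) (hzy : z * y = γ • (y * z))
    (i j k i' j' k' : ℕ) :
    (x ^ i * y ^ j * z ^ k) * (x ^ i' * y ^ j' * z ^ k') =
      (α ^ (i' * j) * β ^ (i' * k) * γ ^ (j' * k)) •
        (x ^ (i + i') * y ^ (j + j') * z ^ (k + k')) := by
  calc (x ^ i * y ^ j * z ^ k) * (x ^ i' * y ^ j' * z ^ k')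
      = x ^ i * (y ^ j * ((z ^ k * x ^ i') * y ^ j' * z ^ k')) := by simp only [mul_assoc]
    _ = β ^ (i' * k) • (x ^ i * ((y ^ j * x ^ i') * ((z ^ k * y ^ j') * z ^ k'))) := by
        rw [pow_mul_pow_of_mul_eq_smul hzx]
        simp only [smul_mul_assoc, mul_smul_comm, mul_assoc]
    _ = _ := by
        rw [pow_mul_pow_of_mul_eq_smul hyx, pow_mul_pow_of_mul_eq_smul hzy]
        simp only [smul_mul_assoc, mul_smul_comm, smul_smul, mul_assoc, pow_add]
        congr 1
        ring

end QCommute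

theorem q_pow_self {p : ℕ} (hp : p ≠ 0) : q p ^ p = 1 := by
  rw [q, ← Complex.exp_nat_mul, mul_div_cancel₀ _ (Nat.cast_ne_zero.mpr hp),
    Complex.exp_two_pi_mul_I]

theorem q_sq_ne_zero (p : ℕ) : q p ^ 2 ≠ 0 := pow_ne_zero 2 (Complex.exp_ne_zero _)

section Relations

variable (p : ℕ)

theorem ηm_mul_ηp : ηm p * ηp p = q p ^ 2 • (ηp p * ηm p) := by
  simpa only [ηp, ηm, map_mul, map_smul] using RingQuot.mkAlgHom_rel ℂ (ERel.commEta (p := p))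

theorem ηp_mul_dl : ηp p * dl p = q p ^ 2 • (dl p * ηp p) := by
  simpa only [ηp, dl, map_mul, map_smul] using RingQuot.mkAlgHom_rel ℂ (ERel.commEpD (p := p))

theorem ηm_mul_dl : ηm p * dl p = q p ^ 2 • (dl p * ηm p) := by
  simpa only [ηm, dl, map_mul, map_smul] using RingQuot.mkAlgHom_rel ℂ (ERel.commEmD (p := p))

theorem dl_pow_self : dl p ^ p = 1 := by
  simpa only [dl, map_pow, map_one] using RingQuot.mkAlgHom_rel ℂ (ERel.deltaPow (p := p))

theorem ηp_pow_self : ηp p ^ p = 0 := by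
  simpa only [ηp, map_pow, map_zero] using RingQuot.mkAlgHom_rel ℂ (ERel.epPow (p := p))

theorem ηm_pow_self : ηm p ^ p = 0 := by
  simpa only [ηm, map_pow, map_zero] using RingQuot.mkAlgHom_rel ℂ (ERel.emPow (p := p))

theorem subalgebra_eq_top_of_generators_mem (T : Subalgebra ℂ (A p)) (hp : ηp p ∈ T)
    (hm : ηm p ∈ T) (hd : dl p ∈ T) : T = ⊤ := by
  suffices h : ∀ a, a ∈ T from eq_top_iff.mpr fun a _ => h a
  intro a
  obtain ⟨y, rfl⟩ := RingQuot.mkAlgHom_surjective ℂ (ERel p) a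
  induction y using FreeAlgebra.induction with
  | grade0 r => rw [AlgHom.commutes]; exact T.algebraMap_mem r
  | grade1 g => cases g <;> assumption
  | mul u v hu hv => rw [map_mul]; exact T.mul_mem hu hv
  | add u v hu hv => rw [map_add]; exact T.add_mem hu hv

end Relations

def monomial (p : ℕ) (x : Fin p × Fin p × Fin p) : A p :=
  ηp p ^ (x.1 : ℕ) * ηm p ^ (x.2.1 : ℕ) * dl p ^ (x.2.2 : ℕ)

section Spanning

variable (p : ℕ) [NeZero p]

theorem pow_mul_pow_mul_pow_mem_span_monomial (n m k : ℕ) :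
    ηp p ^ n * ηm p ^ m * dl p ^ k ∈ Submodule.span ℂ (Set.range (monomial p)) := by
  by_cases hn : n < p
  · by_cases hm : m < p
    · have hk : dl p ^ k = dl p ^ (k % p) := by
        conv_lhs => rw [← Nat.div_add_mod k p, pow_add, pow_mul, dl_pow_self, one_pow, one_mul]
      rw [hk]
      exact Submodule.subset_span ⟨(⟨n, hn⟩, ⟨m, hm⟩, ⟨k % p, Nat.mod_lt k (NeZero.pos p)⟩), rfl⟩
    · rw [← Nat.add_sub_of_le (not_lt.mp hm), pow_add, ηm_pow_self, zero_mul, mul_zero, zero_mul]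
      exact Submodule.zero_mem _
  · rw [← Nat.add_sub_of_le (not_lt.mp hn), pow_add, ηp_pow_self, zero_mul, zero_mul, zero_mul]
    exact Submodule.zero_mem _

theorem mul_mem_span_monomial {a b : A p} (ha : a ∈ Submodule.span ℂ (Set.range (monomial p)))
    (hb : b ∈ Submodule.span ℂ (Set.range (monomial p))) :
    a * b ∈ Submodule.span ℂ (Set.range (monomial p)) := by
  have hq := q_sq_ne_zero p
  suffices h : Submodule.span ℂ (Set.range (monomial p)) * Submodule.span ℂ (Set.range (monomial p))
      ≤ Submodule.span ℂ (Set.range (monomial p)) from h (Submodule.mul_mem_mul ha hb)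
  rw [Submodule.span_mul_span, Submodule.span_le]
  rintro _ ⟨_, ⟨x, rfl⟩, _, ⟨y, rfl⟩, rfl⟩
  dsimp only
  rw [monomial, monomial, pow_mul_pow_mul_pow_mul_pow_mul_pow_mul_pow (ηm_mul_ηp p)
    (mul_eq_inv_smul_mul_of_mul_eq_smul hq (ηp_mul_dl p))
    (mul_eq_inv_smul_mul_of_mul_eq_smul hq (ηm_mul_dl p))]
  exact Submodule.smul_mem _ _ (pow_mul_pow_mul_pow_mem_span_monomial p _ _ _)

theorem span_monomial_eq_top : Submodule.span ℂ (Set.range (monomial p)) = ⊤ := by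
  have hmem := pow_mul_pow_mul_pow_mem_span_monomial p
  have hT := subalgebra_eq_top_of_generators_mem p
    ((Submodule.span ℂ (Set.range (monomial p))).toSubalgebra (by simpa using hmem 0 0 0)
      fun _ _ => mul_mem_span_monomial p)
    (by simpa using hmem 1 0 0) (by simpa using hmem 0 1 0) (by simpa using hmem 0 0 1)
  simpa using congrArg Subalgebra.toSubmodule hT

end Spanning

section Representation

open Matrix

variable (p : ℕ) [NeZero p]

/-- Left multiplication on `A` in the basis `e_{(n,m,k)} = η₊ⁿ η₋ᵐ δᵏ`: `η₊` raises `n`, `η₋`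
raises `m` at the cost of `q^{2n}`, and `δ` raises `k` (mod `p`) at the cost of `q^{-2(n+m)}`. -/
def genMatrix : Gen → Matrix (Fin p × Fin p × Fin p) (Fin p × Fin p × Fin p) ℂ
  | .ep => truncShift ℂ p ⊗ₖ (1 ⊗ₖ 1)
  | .em => geomDiagonal (q p ^ 2) ⊗ₖ (truncShift ℂ p ⊗ₖ 1)
  | .d => geomDiagonal (q p ^ 2)⁻¹ ⊗ₖ (geomDiagonal (q p ^ 2)⁻¹ ⊗ₖ cycShift ℂ p)

theorem lift_genMatrix_eq_of_rel ⦃x y : FreeAlgebra ℂ Gen⦄ (h : ERel p x y) :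
    FreeAlgebra.lift ℂ (genMatrix p) x = FreeAlgebra.lift ℂ (genMatrix p) y := by
  have hq := q_sq_ne_zero p
  have hqp : (q p ^ 2) ^ p = 1 := by
    rw [← pow_mul, mul_comm, pow_mul, q_pow_self (NeZero.ne p), one_pow]
  have hS := truncShift_mul_geomDiagonal (R := ℂ) (p := p) (mul_inv_cancel₀ hq)
  cases h <;>
    simp only [map_mul, map_smul, map_pow, map_one, map_zero, FreeAlgebra.lift_ι_apply, genMatrix,
      ← mul_kronecker_mul, kronecker_pow]
  · simp [geomDiagonal_mul_truncShift, smul_kronecker]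
  · simp [hS, smul_kronecker]
  · simp [hS, geomDiagonal_mul_comm (q p ^ 2), smul_kronecker, kronecker_smul]
  · simp [geomDiagonal_pow, hqp, geomDiagonal_one, cycShift_pow_self]
  · simp [truncShift_pow_self]
  · simp [truncShift_pow_self]

def regRep : A p →ₐ[ℂ] Matrix (Fin p × Fin p × Fin p) (Fin p × Fin p × Fin p) ℂ :=
  RingQuot.liftAlgHom ℂ ⟨FreeAlgebra.lift ℂ (genMatrix p), lift_genMatrix_eq_of_rel p⟩

theorem regRep_monomial_apply_zero (x i : Fin p × Fin p × Fin p) :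
    regRep p (monomial p x) i 0 = Pi.single (M := fun _ => ℂ) x 1 i := by
  obtain ⟨n, m, k⟩ := x
  obtain ⟨i₁, i₂, i₃⟩ := i
  simp only [monomial, regRep, ηp, ηm, dl, map_mul, map_pow, RingQuot.liftAlgHom_mkAlgHom_apply,
    FreeAlgebra.lift_ι_apply, genMatrix, kronecker_pow, ← mul_kronecker_mul]
  simp only [← Prod.mk_zero_zero, one_pow, one_mul, geomDiagonal_pow, kronecker_apply,
    mul_geomDiagonal_apply_zero, truncShift_pow_apply, cycShift_pow_apply, Pi.single_apply]
  simp only [Fin.val_zero, zero_add, Fin.cast_val_eq_self, ← Fin.ext_iff, Prod.mk.injEq]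
  split_ifs <;> simp_all

theorem linearIndependent_monomial : LinearIndependent ℂ (monomial p) := by
  let firstColumn : Matrix (Fin p × Fin p × Fin p) (Fin p × Fin p × Fin p) ℂ →ₗ[ℂ]
      (Fin p × Fin p × Fin p → ℂ) :=
    { toFun := fun M i => M i 0, map_add' := fun _ _ => rfl, map_smul' := fun _ _ => rfl }
  refine LinearIndependent.of_comp (firstColumn ∘ₗ (regRep p).toLinearMap) ?_
  convert (Pi.basisFun ℂ (Fin p × Fin p × Fin p)).linearIndependent
  ext x i
  rw [Pi.basisFun_apply]
  exact regRep_monomial_apply_zero p x i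

end Representation

theorem statement1_general (p : ℕ) (hp3 : 3 ≤ p) :
    LinearIndependent ℂ
      (fun x : Fin p × Fin p × Fin p =>
        ηp p ^ (x.1 : ℕ) * ηm p ^ (x.2.1 : ℕ) * dl p ^ (x.2.2 : ℕ)) ∧
    Submodule.span ℂ
      (Set.range (fun x : Fin p × Fin p × Fin p =>
        ηp p ^ (x.1 : ℕ) * ηm p ^ (x.2.1 : ℕ) * dl p ^ (x.2.2 : ℕ))) = ⊤ ∧
    Module.finrank ℂ (A p) = p ^ 3 := by
  have : NeZero p := ⟨by omega⟩
  have hli := linearIndependent_monomial p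
  have hspan := span_monomial_eq_top p
  refine ⟨hli, hspan, ?_⟩
  rw [Module.finrank_eq_card_basis (Module.Basis.mk hli hspan.ge)]
  simp only [Fintype.card_prod, Fintype.card_fin]
  ring

theorem statement1 (p : ℕ) (hp : Odd p) (hp3 : 3 ≤ p) :
    LinearIndependent ℂ
      (fun x : Fin p × Fin p × Fin p =>
        ηp p ^ (x.1 : ℕ) * ηm p ^ (x.2.1 : ℕ) * dl p ^ (x.2.2 : ℕ)) ∧
    Submodule.span ℂ
      (Set.range (fun x : Fin p × Fin p × Fin p =>
        ηp p ^ (x.1 : ℕ) * ηm p ^ (x.2.1 : ℕ) * dl p ^ (x.2.2 : ℕ))) = ⊤ ∧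
    Module.finrank ℂ (A p) = p ^ 3 :=
  statement1_general p hp3
end
end

section
/- If λ₊ and λ₋ are real numbers, then the operators L₊, L₋, K are symmetric with respect to the indefinite Hermitian form h: for all x, y ∈ ℂ^p, h(L₊x, y) = h(x, L₊y), h(L₋x, y) = h(x, L₋y), and h(Kx, y) = h(x, Ky); that is, ℒ^λ is a *-representation of U_q(e(1,1)) with respect to the involution p±* = p±, κ* = κ on the pseudo-Euclidean space (ℂ^p, h). -/
noncomputable section

/-- `L₊ : v_m ↦ λ₊ v_{m+1}` on `ℂ^p` with basis `(v_m)_{m ∈ ℤ/pℤ}`. -/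
def Lplus (p : ℕ) (l : ℂ) : Module.End ℂ (ZMod p → ℂ) where
  toFun x := fun m => l * x (m - 1)
  map_add' x y := by funext m; simp [mul_add]
  map_smul' c x := by funext m; simp [smul_eq_mul]; ring

/-- `L₋ : v_m ↦ λ₋ v_{m−1}` on `ℂ^p`. -/
def Lminus (p : ℕ) (l : ℂ) : Module.End ℂ (ZMod p → ℂ) where
  toFun x := fun m => l * x (m + 1)
  map_add' x y := by funext m; simp [mul_add]
  map_smul' c x := by funext m; simp [smul_eq_mul]; ring

/-- `K : v_m ↦ q^m v_m` on `ℂ^p`. -/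
def Kop (p : ℕ) : Module.End ℂ (ZMod p → ℂ) where
  toFun x := fun m => q p ^ m.val * x m
  map_add' x y := by funext m; simp [mul_add]
  map_smul' c x := by funext m; simp [smul_eq_mul]; ring
/-- The indefinite Hermitian form `h(x,y) = Σ_n conj(x_n)·y_{−n}`,
determined by `h(v_n, v_m) = δ_{n+m,0 (mod p)}`. -/

lemma q_pow_p (p : ℕ) [NeZero p] : q p ^ p = 1 := by
  have hp : (p : ℂ) ≠ 0 := Nat.cast_ne_zero.mpr (NeZero.ne p)
  rw [q, ← Complex.exp_nat_mul]
  rw [mul_div_cancel₀ _ hp, Complex.exp_two_pi_mul_I]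

lemma q_conj_mul (p : ℕ) : (starRingEnd ℂ) (q p) * q p = 1 := by
  rw [q, ← Complex.exp_conj, ← Complex.exp_add]
  have : (starRingEnd ℂ) (2 * ↑Real.pi * Complex.I / ↑p) + 2 * ↑Real.pi * Complex.I / ↑p = 0 := by
    simp [map_div₀, Complex.conj_I, map_ofNat]
    ring
  rw [this, Complex.exp_zero]

lemma q_conj_pow (p : ℕ) [NeZero p] (n : ZMod p) :
    (starRingEnd ℂ) (q p ^ n.val) = q p ^ (-n).val := by
  have h1 : (starRingEnd ℂ) (q p ^ n.val) * q p ^ n.val = 1 := by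
    rw [map_pow, ← mul_pow, q_conj_mul, one_pow]
  have h2 : q p ^ (-n).val * q p ^ n.val = 1 := by
    rw [← pow_add]
    have hd : (p : ℕ) ∣ (-n).val + n.val := by
      have hz : (((-n).val + n.val : ℕ) : ZMod p) = 0 := by
        push_cast [ZMod.natCast_val, ZMod.cast_id]; ring
      exact (ZMod.natCast_eq_zero_iff ((-n).val + n.val) p).mp hz
    obtain ⟨k, hk⟩ := hd
    rw [hk, pow_mul, q_pow_p p, one_pow]
  have hne : q p ^ n.val ≠ 0 := by
    intro h; rw [h, mul_zero] at h2; simp at h2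
  exact mul_right_cancel₀ hne (h1.trans h2.symm)

def hform (p : ℕ) [NeZero p] (x y : ZMod p → ℂ) : ℂ :=
  ∑ n : ZMod p, (starRingEnd ℂ) (x n) * y (-n)

/-- For real `λ₊, λ₋` the operators `L₊, L₋, K` are symmetric for the indefinite
Hermitian form `h`: `ℒ^λ` is a `*`-representation of `U_q(e(1,1))` on `(ℂ^p, h)`. -/
theorem statement7 (p : ℕ) [NeZero p] (hp : Odd p) (hp3 : 3 ≤ p) (lp lm : ℝ) :
    (∀ x y : ZMod p → ℂ, hform p (Lplus p (lp : ℂ) x) y = hform p x (Lplus p (lp : ℂ) y)) ∧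
    (∀ x y : ZMod p → ℂ, hform p (Lminus p (lm : ℂ) x) y = hform p x (Lminus p (lm : ℂ) y)) ∧
    (∀ x y : ZMod p → ℂ, hform p (Kop p x) y = hform p x (Kop p y)) := by
  refine ⟨fun x y => ?_, fun x y => ?_, fun x y => ?_⟩
  · show (∑ n : ZMod p, (starRingEnd ℂ) ((lp:ℂ) * x (n-1)) * y (-n)) =
      ∑ n : ZMod p, (starRingEnd ℂ) (x n) * ((lp:ℂ) * y (-n-1))
    refine (Fintype.sum_equiv (Equiv.addRight (1:ZMod p)) _ _ fun n => ?_).symm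
    simp [Equiv.addRight, Complex.conj_ofReal]
    ring_nf
  · show (∑ n : ZMod p, (starRingEnd ℂ) ((lm:ℂ) * x (n+1)) * y (-n)) =
      ∑ n : ZMod p, (starRingEnd ℂ) (x n) * ((lm:ℂ) * y (-n+1))
    refine (Fintype.sum_equiv (Equiv.subRight (1:ZMod p)) _ _ fun n => ?_).symm
    simp [Equiv.subRight, Complex.conj_ofReal]
    ring_nf
  · refine Finset.sum_congr rfl fun n _ => ?_
    show (starRingEnd ℂ) (q p ^ n.val * x n) * y (-n) =
      (starRingEnd ℂ) (x n) * (q p ^ (-n).val * y (-n))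
    rw [map_mul, q_conj_pow]
    ring
end
end
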